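/- For positive definite matrices A, B and t ∈ [0,1], one has A^{-1} ♯ (A ♮_t B) = (A^{-1} ♯ B)^t. -/

import Mathlib

/-!
Write `S = A⁻¹ ♯ B` and `G = S ^ t`, so that `A ♮_t B = G A G` by definition; `G` is positive
semidefinite. For every such `G`, `A⁻¹ ♯ (G A G) = G`: with `Q = A^{1/2} = (A⁻¹)^{-1/2}`,
the inner matrix `Q (G A G) Q` is the square of the positive matrix `Q G Q`, so its square root
is `Q G Q`, and conjugating back by `Q⁻¹ = (A⁻¹)^{1/2}` leaves `G`.
-/

open Matrix
open scoped ComplexOrder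

noncomputable def mpow {m : Type*} [Fintype m] [DecidableEq m]
    (A : Matrix m m ℂ) (t : ℝ) : Matrix m m ℂ :=
  if h : A.IsHermitian then
    (h.eigenvectorUnitary : Matrix m m ℂ) *
      Matrix.diagonal (fun i => ((h.eigenvalues i ^ t : ℝ) : ℂ)) *
      star (h.eigenvectorUnitary : Matrix m m ℂ)
  else A

/-- t-metric geometric mean `A ♯ₜ B`. -/
noncomputable def msharp {m : Type*} [Fintype m] [DecidableEq m]
    (A B : Matrix m m ℂ) (t : ℝ) : Matrix m m ℂ :=
  mpow A (1/2) * mpow (mpow A (-(1/2)) * B * mpow A (-(1/2))) t * mpow A (1/2)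

/-- t-spectral geometric mean `A ♮ₜ B`. -/
noncomputable def mnat {m : Type*} [Fintype m] [DecidableEq m]
    (A B : Matrix m m ℂ) (t : ℝ) : Matrix m m ℂ :=
  mpow (msharp A⁻¹ B (1/2)) t * A * mpow (msharp A⁻¹ B (1/2)) t

/-- Eigenvalues in non-increasing order (junk value `0` if not Hermitian). -/
noncomputable def eigsDesc {n : ℕ} (A : Matrix (Fin n) (Fin n) ℂ) : Fin n → ℝ :=
  if h : A.IsHermitian then (fun i => h.eigenvalues (Tuple.sort h.eigenvalues i.rev)) else 0

/-- `x` is log-majorized by `y` (both listed in non-increasing order). -/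
def LogMaj {n : ℕ} (x y : Fin n → ℝ) : Prop :=
  (∀ k : ℕ, ∏ i ∈ Finset.univ.filter (fun i : Fin n => (i : ℕ) < k), x i ≤
      ∏ i ∈ Finset.univ.filter (fun i : Fin n => (i : ℕ) < k), y i) ∧
    ∏ i, x i = ∏ i, y i

/-- k-th compound matrix. -/
noncomputable def compound {n : ℕ} (k : ℕ) (A : Matrix (Fin n) (Fin n) ℂ) :
    Matrix {s : Finset (Fin n) // s.card = k} {s : Finset (Fin n) // s.card = k} ℂ :=
  fun s t => (A.submatrix (fun i => (s.1.orderIsoOfFin s.2 i : Fin n))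
    (fun i => (t.1.orderIsoOfFin t.2 i : Fin n))).det

open scoped MatrixOrder

theorem Matrix.PosSemidef.mul_mul_same_of_isHermitian {m : Type*} [Fintype m]
    {B C : Matrix m m ℂ} (hB : B.PosSemidef) (hC : C.IsHermitian) : (C * B * C).PosSemidef := by
  simpa only [hC.eq] using hB.mul_mul_conjTranspose_same C

section

variable {m : Type*} [Fintype m] [DecidableEq m] {A G M : Matrix m m ℂ}

theorem mpow_eq_cfc (hA : A.IsHermitian) (t : ℝ) : mpow A t = cfc (· ^ t : ℝ → ℝ) A := by
  rw [mpow, dif_pos hA, hA.cfc_eq, IsHermitian.cfc, Unitary.conjStarAlgAut_apply]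
  rfl

theorem mpow_eq_rpow (hA : A.PosSemidef) (t : ℝ) : mpow A t = A ^ t := by
  rw [mpow_eq_cfc hA.1, CFC.rpow_eq_cfc_real (nonneg_iff_posSemidef.mpr hA)]

theorem isHermitian_mpow (hA : A.IsHermitian) (t : ℝ) : (mpow A t).IsHermitian := by
  rw [mpow_eq_cfc hA]
  exact cfc_predicate _ A

theorem posSemidef_mpow (hA : A.PosSemidef) (t : ℝ) : (mpow A t).PosSemidef := by
  rw [mpow_eq_rpow hA, ← nonneg_iff_posSemidef]
  exact CFC.rpow_nonneg

theorem mpow_half_mul_self (hM : M.PosSemidef) : mpow (M * M) (1 / 2) = M := by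
  have hMM : (M * M).PosSemidef := by
    simpa only [hM.1.eq] using posSemidef_conjTranspose_mul_self M
  rw [mpow_eq_rpow hMM, ← CFC.sqrt_eq_rpow, CFC.sqrt_mul_self M (nonneg_iff_posSemidef.mpr hM)]

theorem posSemidef_msharp {B : Matrix m m ℂ} (hA : A.IsHermitian) (hB : B.PosSemidef) (t : ℝ) :
    (msharp A B t).PosSemidef :=
  (posSemidef_mpow (hB.mul_mul_same_of_isHermitian (isHermitian_mpow hA _)) t
    ).mul_mul_same_of_isHermitian (isHermitian_mpow hA _)

theorem msharp_inv_conj_half (hA : A.PosDef) (hG : G.PosSemidef) :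
    msharp A⁻¹ (G * A * G) (1 / 2) = G := by
  have ha : IsStrictlyPositive A⁻¹ := hA.inv.isStrictlyPositive
  rw [msharp, mpow_eq_rpow hA.inv.posSemidef, mpow_eq_rpow hA.inv.posSemidef]
  set P := A⁻¹ ^ (1 / 2 : ℝ)
  set Q := A⁻¹ ^ (-(1 / 2) : ℝ)
  have hQQ : Q * Q = A := by
    rw [← CFC.rpow_add ha.isUnit, ← neg_add, add_halves, ← CFC.inverse_eq_rpow_neg_one,
      ← nonsing_inv_eq_ringInverse,
      nonsing_inv_nonsing_inv _ (A.isUnit_iff_isUnit_det.mp hA.isUnit)]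
  have hQGQ : (Q * G * Q).PosSemidef :=
    hG.mul_mul_same_of_isHermitian (nonneg_iff_posSemidef.mp CFC.rpow_nonneg).1
  rw [show Q * (G * A * G) * Q = (Q * G * Q) * (Q * G * Q) by rw [← hQQ]; noncomm_ring,
    mpow_half_mul_self hQGQ]
  calc P * (Q * G * Q) * P = (P * Q) * G * (Q * P) := by noncomm_ring
    _ = G := by rw [CFC.rpow_mul_rpow_neg, CFC.rpow_neg_mul_rpow, one_mul, mul_one]

end

theorem msharp_inv_mnat_general {n : ℕ} (A B : Matrix (Fin n) (Fin n) ℂ)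
    (hA : A.PosDef) (hB : B.PosDef) (t : ℝ) :
    msharp A⁻¹ (mnat A B t) (1/2) = mpow (msharp A⁻¹ B (1/2)) t :=
  msharp_inv_conj_half hA (posSemidef_mpow (posSemidef_msharp hA.inv.1 hB.posSemidef _) t)

theorem msharp_inv_mnat {n : ℕ} (A B : Matrix (Fin n) (Fin n) ℂ)
    (hA : A.PosDef) (hB : B.PosDef) (t : ℝ) (ht : t ∈ Set.Icc (0:ℝ) 1) :
    msharp A⁻¹ (mnat A B t) (1/2) = mpow (msharp A⁻¹ B (1/2)) t :=
  msharp_inv_mnat_general A B hA hB t
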